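/- arXiv:2406.07206 — 3 statements merged into one kernel-verified Lean document; each statement's English description precedes it below -/
import Mathlib

section
/- For every δ > 0 there is a constant C(δ) such that for all n ≥ 1 and all h ∈ ℤ³\{0}: Σ_{k ∈ ℤ²\{0}, 1 ≤ |h+k| ≤ |h|/2, n ≤ |k| ≤ 2n} |h|² / (|k|² |h+k|^{2+δ}) ≤ C(δ), where k ∈ ℤ²\{0} is identified with (k₁,k₂,0) ∈ ℤ³. -/
/-!
If `|h + k| ≤ |h| / 2`, the triangle inequality `|h| ≤ |h + k| + |k|` gives `|h| ≤ 2 |k|`, so the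
factor `|h|² / |k|²` is at most `4`. Writing `h' = (h₁, h₂)`, the point `h' + k ∈ ℤ²` is the
projection of `h + k`, hence `|h + k| ≥ max (1, ‖h' + k‖)` for the sup norm `‖·‖`. Each summand
is therefore at most `4 max (1, ‖h' + k‖) ^ (-(2 + δ))`, and summing over `k` gives a translate of
the lattice sum `Σ_{z ∈ ℤ²} 4 max (1, ‖z‖) ^ (-(2 + δ))`, which converges and depends on neither
`n` nor `h`.
-/

open scoped BigOperators Classical

/-- Euclidean norm of an integer lattice point in `ℤ³`. -/
noncomputable def nrm3 (k : Fin 3 → ℤ) : ℝ :=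
  Real.sqrt (((k 0 : ℝ)) ^ 2 + ((k 1 : ℝ)) ^ 2 + ((k 2 : ℝ)) ^ 2)

/-- Euclidean norm of an integer lattice point in `ℤ²`. -/
noncomputable def nrm2 (k : Fin 2 → ℤ) : ℝ :=
  Real.sqrt (((k 0 : ℝ)) ^ 2 + ((k 1 : ℝ)) ^ 2)

/-- A point of `ℤ²` identified with `(k₁, k₂, 0) ∈ ℤ³`. -/
def emb2 (k : Fin 2 → ℤ) : Fin 3 → ℤ := ![k 0, k 1, 0]

lemma nrm3_nonneg (k : Fin 3 → ℤ) : 0 ≤ nrm3 k := Real.sqrt_nonneg _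

lemma nrm2_nonneg (k : Fin 2 → ℤ) : 0 ≤ nrm2 k := Real.sqrt_nonneg _

lemma nrm3_eq_norm (k : Fin 3 → ℤ) :
    nrm3 k = ‖(WithLp.toLp 2 fun i ↦ (k i : ℝ) : EuclideanSpace ℝ (Fin 3))‖ := by
  simp [nrm3, EuclideanSpace.norm_eq, Fin.sum_univ_three, add_assoc]

lemma nrm3_sub_le (a b : Fin 3 → ℤ) : nrm3 (a - b) ≤ nrm3 a + nrm3 b := by
  have hsub : (WithLp.toLp 2 fun i ↦ ((a - b) i : ℝ) : EuclideanSpace ℝ (Fin 3)) =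
      WithLp.toLp 2 (fun i ↦ (a i : ℝ)) - WithLp.toLp 2 (fun i ↦ (b i : ℝ)) := by
    ext i
    simp
  rw [nrm3_eq_norm, nrm3_eq_norm, nrm3_eq_norm, hsub]
  exact norm_sub_le _ _

lemma nrm3_emb2 (k : Fin 2 → ℤ) : nrm3 (emb2 k) = nrm2 k := by
  simp [nrm3, nrm2, emb2]

lemma nrm3_le_two_mul_nrm2 {h : Fin 3 → ℤ} {k : Fin 2 → ℤ}
    (hk : nrm3 (h + emb2 k) ≤ nrm3 h / 2) : nrm3 h ≤ 2 * nrm2 k := by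
  have := nrm3_sub_le (h + emb2 k) (emb2 k)
  rw [add_sub_cancel_right, nrm3_emb2] at this
  linarith

lemma norm_le_nrm2 (z : Fin 2 → ℤ) : ‖z‖ ≤ nrm2 z := by
  refine (pi_norm_le_iff_of_nonneg (nrm2_nonneg z)).mpr fun i ↦ ?_
  rw [Int.norm_eq_abs, nrm2]
  fin_cases i <;> exact Real.abs_le_sqrt (by simp [sq_nonneg])

lemma nrm2_add_le_nrm3_add_emb2 (h : Fin 3 → ℤ) (k : Fin 2 → ℤ) :
    nrm2 (![h 0, h 1] + k) ≤ nrm3 (h + emb2 k) := by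
  refine Real.sqrt_le_sqrt ?_
  simp only [emb2, Fin.isValue, Pi.add_apply, Matrix.cons_val_zero, Matrix.cons_val_one,
    Matrix.cons_val_fin_one, Matrix.cons_val, Int.cast_add, add_zero, le_add_iff_nonneg_right]
  positivity

lemma one_le_norm_of_ne_zero {ι : Type*} [Fintype ι] {z : ι → ℤ} (hz : z ≠ 0) : 1 ≤ ‖z‖ := by
  obtain ⟨i, hi⟩ := Function.ne_iff.mp hz
  calc (1 : ℝ) ≤ ‖z i‖ := by rw [Int.norm_eq_abs]; exact_mod_cast Int.one_le_abs hi
    _ ≤ ‖z‖ := norm_le_pi_norm z i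

lemma summable_max_one_norm_rpow_neg {p : ℝ} (hp : 2 < p) :
    Summable fun z : Fin 2 → ℤ ↦ max 1 ‖z‖ ^ (-p) :=
  (EisensteinSeries.summable_one_div_norm_rpow hp).congr_cofinite <|
    (Filter.eventually_cofinite_ne 0).mono fun _ hz ↦ by
      simp only [max_eq_right (one_le_norm_of_ne_zero hz)]

noncomputable def convolutionSummand (δ : ℝ) (n : ℕ) (h : Fin 3 → ℤ) (k : Fin 2 → ℤ) : ℝ :=
  if k ≠ 0 ∧ 1 ≤ nrm3 (h + emb2 k) ∧ nrm3 (h + emb2 k) ≤ nrm3 h / 2 ∧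
      (n : ℝ) ≤ nrm2 k ∧ nrm2 k ≤ 2 * n then
    nrm3 h ^ 2 / (nrm2 k ^ 2 * nrm3 (h + emb2 k) ^ (2 + δ)) else 0

lemma convolutionSummand_nonneg (δ : ℝ) (n : ℕ) (h : Fin 3 → ℤ) (k : Fin 2 → ℤ) :
    0 ≤ convolutionSummand δ n h k := by
  unfold convolutionSummand
  split_ifs
  · exact div_nonneg (sq_nonneg _) (mul_nonneg (sq_nonneg _) (Real.rpow_nonneg (nrm3_nonneg _) _))
  · exact le_rfl

lemma convolutionSummand_le {δ : ℝ} (hδ : 0 ≤ δ) (n : ℕ) (h : Fin 3 → ℤ) (k : Fin 2 → ℤ) :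
    convolutionSummand δ n h k ≤ 4 * max 1 ‖![h 0, h 1] + k‖ ^ (-(2 + δ)) := by
  have hm : 0 < max 1 ‖![h 0, h 1] + k‖ := by positivity
  unfold convolutionSummand
  split_ifs with hk
  · obtain ⟨-, hc1, hhalf, -, -⟩ := hk
    have ha := nrm3_le_two_mul_nrm2 hhalf
    have hmc : max 1 ‖![h 0, h 1] + k‖ ≤ nrm3 (h + emb2 k) :=
      max_le hc1 ((norm_le_nrm2 _).trans (nrm2_add_le_nrm3_add_emb2 h k))
    rcases (nrm2_nonneg k).eq_or_lt with hb | hb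
    · rw [← hb, zero_pow two_ne_zero, zero_mul, div_zero]
      positivity
    calc nrm3 h ^ 2 / (nrm2 k ^ 2 * nrm3 (h + emb2 k) ^ (2 + δ))
        ≤ (2 * nrm2 k) ^ 2 / (nrm2 k ^ 2 * nrm3 (h + emb2 k) ^ (2 + δ)) := by
          gcongr
          exact nrm3_nonneg h
      _ = 4 * nrm3 (h + emb2 k) ^ (-(2 + δ)) := by
          rw [Real.rpow_neg (nrm3_nonneg _)]
          field_simp
          ring
      _ ≤ 4 * max 1 ‖![h 0, h 1] + k‖ ^ (-(2 + δ)) := by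
          gcongr 4 * ?_
          exact Real.rpow_le_rpow_of_nonpos hm hmc (by linarith)
  · positivity

/-- For every `δ > 0` there is `C(δ)` such that for all `n ≥ 1` and `h ∈ ℤ³\{0}`:
`Σ_{k ∈ ℤ²\{0}, 1 ≤ |h+k| ≤ |h|/2, n ≤ |k| ≤ 2n} |h|²/(|k|² |h+k|^{2+δ}) ≤ C(δ)`. -/
theorem lattice_convolution_bound_2d (δ : ℝ) (hδ : 0 < δ) :
    ∃ C > 0, ∀ n : ℕ, 1 ≤ n → ∀ h : Fin 3 → ℤ, h ≠ 0 →
      (∑' k : Fin 2 → ℤ,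
        if k ≠ 0 ∧ 1 ≤ nrm3 (h + emb2 k) ∧ nrm3 (h + emb2 k) ≤ nrm3 h / 2 ∧
            (n : ℝ) ≤ nrm2 k ∧ nrm2 k ≤ 2 * n then
          nrm3 h ^ 2 / (nrm2 k ^ 2 * nrm3 (h + emb2 k) ^ (2 + δ)) else 0) ≤ C := by
  set w : (Fin 2 → ℤ) → ℝ := fun z ↦ 4 * max 1 ‖z‖ ^ (-(2 + δ))
  have hw_pos (z : Fin 2 → ℤ) : 0 < w z := by positivity
  have hw : Summable w := (summable_max_one_norm_rpow_neg (by linarith)).mul_left 4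
  refine ⟨∑' z, w z, hw.tsum_pos (fun z ↦ (hw_pos z).le) 0 (hw_pos 0), fun n _ h _ ↦ ?_⟩
  change ∑' k, convolutionSummand δ n h k ≤ _
  set h' : Fin 2 → ℤ := ![h 0, h 1]
  have hle (k : Fin 2 → ℤ) : convolutionSummand δ n h k ≤ w (h' + k) :=
    convolutionSummand_le hδ.le n h k
  have hw' : Summable fun k ↦ w (h' + k) := (Equiv.addLeft h').summable_iff.mpr hw
  calc ∑' k, convolutionSummand δ n h k
      ≤ ∑' k, w (h' + k) :=
        (hw'.of_nonneg_of_le (convolutionSummand_nonneg δ n h) hle).tsum_le_tsum hle hw'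
    _ = ∑' z, w z := (Equiv.addLeft h').tsum_eq w
end

section
/- Let B̄ : [0,T] → H¹(𝕋³;ℝ³) be a (sufficiently regular) zero-mean divergence-free solution of ∂_t B̄ = (η + η_iso)ΔB̄ + ∇×(A_ρ B̄), where η, η_iso > 0, A_ρ = (2πρ log 2/(C₁C₂))·diag(1,1,0) with |ρ| ≤ 1 and C₁, C₂ > 0, and η_iso = 2ζ_{s,3}/(3C_V²) with ζ_{s,3} = 4π log 2 and C₁ = C₂ = C_V. Then for all t ∈ [0,T]: ‖B̄_t‖_{L²} ≤ ‖B̄_0‖_{L²} · exp(−(η + (8 − 6|ρ|)π log 2/(3C_V²)) t). -/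
open scoped BigOperators Classical

/-- Cross product of vectors in `ℂ³`. -/
noncomputable def crossC (u v : Fin 3 → ℂ) : Fin 3 → ℂ :=
  ![u 1 * v 2 - u 2 * v 1, u 2 * v 0 - u 0 * v 2, u 0 * v 1 - u 1 * v 0]

/-- Squared Euclidean norm of a vector in `ℂ³`. -/
noncomputable def vnSq (v : Fin 3 → ℂ) : ℝ := ∑ i, ‖v i‖ ^ 2

/-- An integer lattice point viewed as a complex vector. -/
noncomputable def intC (k : Fin 3 → ℤ) : Fin 3 → ℂ := fun i => (k i : ℂ)

/-!
Each Fourier mode evolves on its own. For a mode `k ≠ 0` the diffusion contributes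
`-A |k|² ‖v‖²` to `½ d/dt ‖v‖²`, while the α-term `i k × (A_ρ v)` has norm at most `|c| |k| ‖v‖`
and so contributes at most `|c| |k| ‖v‖²`. As `|k| ≥ 1` and `|c| ≤ 2A`, the net rate
`A |k|² - |c| |k|` is at least `A - |c| = η + (8 - 6|ρ|) π log 2 / (3 C_V²)`, and Grönwall's lemma
gives the decay of every mode at that rate. The zero mode vanishes, and summing over `k` gives
the `L²` bound.
-/

open Real

theorem le_mul_exp_of_hasDerivAt_le {f f' : ℝ → ℝ} {K : ℝ}
    (hf : ∀ s, HasDerivAt f (f' s) s) (hle : ∀ s, f' s ≤ K * f s) {t : ℝ} (ht : 0 ≤ t) :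
    f t ≤ f 0 * exp (K * t) := by
  have hcont : ContinuousOn f (Set.Icc 0 t) := fun s _ => (hf s).continuousAt.continuousWithinAt
  have h := le_gronwallBound_of_liminf_deriv_right_le (K := K) (ε := 0) hcont
    (fun s _ r hr => (hf s).hasDerivWithinAt.liminf_right_slope_le hr) le_rfl
    (fun s _ => (hle s).trans_eq (add_zero _).symm) t ⟨ht, le_rfl⟩
  rwa [sub_zero, gronwallBound_ε0] at h

section Energy

variable {E : Type*} [NormedAddCommGroup E] [InnerProductSpace ℝ E]

theorem norm_sq_le_of_inner_deriv_le {x x' : ℝ → E} {μ : ℝ}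
    (hx : ∀ s, HasDerivAt x (x' s) s) (hdiss : ∀ s, inner ℝ (x s) (x' s) ≤ -μ * ‖x s‖ ^ 2)
    {t : ℝ} (ht : 0 ≤ t) : ‖x t‖ ^ 2 ≤ ‖x 0‖ ^ 2 * exp (-μ * t) ^ 2 := by
  have h := le_mul_exp_of_hasDerivAt_le (fun s => (hx s).norm_sq) (K := -2 * μ)
    (fun s => by linarith [hdiss s]) ht
  rwa [← exp_nat_mul, Nat.cast_two, ← mul_assoc, mul_neg, ← neg_mul]

theorem inner_neg_smul_add_le {y w : E} {μ β : ℝ} (hw : ‖w‖ ≤ β * ‖y‖) :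
    inner ℝ y (-μ • y + w) ≤ -(μ - β) * ‖y‖ ^ 2 := by
  rw [inner_add_right, real_inner_smul_right, real_inner_self_eq_norm_sq]
  nlinarith [real_inner_le_norm y w, mul_le_mul_of_nonneg_left hw (norm_nonneg y)]

end Energy

theorem one_le_nrm3 {k : Fin 3 → ℤ} (hk : k ≠ 0) : 1 ≤ nrm3 k := by
  have hk' : k 0 ≠ 0 ∨ k 1 ≠ 0 ∨ k 2 ≠ 0 := by
    contrapose! hk
    ext i; fin_cases i <;> simp [hk]
  have hsum : 1 ≤ k 0 ^ 2 + k 1 ^ 2 + k 2 ^ 2 := by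
    rcases hk' with h | h | h <;>
      linarith [sq_pos_of_ne_zero h, sq_nonneg (k 0), sq_nonneg (k 1), sq_nonneg (k 2)]
  exact Real.one_le_sqrt.mpr (by exact_mod_cast hsum)

theorem nrm3_sq (k : Fin 3 → ℤ) : nrm3 k ^ 2 = (k 0 : ℝ) ^ 2 + (k 1 : ℝ) ^ 2 + (k 2 : ℝ) ^ 2 :=
  Real.sq_sqrt (by positivity)

theorem vnSq_nonneg (v : Fin 3 → ℂ) : 0 ≤ vnSq v :=
  Finset.sum_nonneg fun _ _ => by positivity

theorem vnSq_eq_norm_sq (v : Fin 3 → ℂ) : vnSq v = ‖WithLp.toLp 2 v‖ ^ 2 := by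
  simp [vnSq, EuclideanSpace.norm_sq_eq]

theorem vnSq_crossC_intC_le (k : Fin 3 → ℤ) (v : Fin 3 → ℂ) :
    vnSq (crossC (intC k) v) ≤ nrm3 k ^ 2 * vnSq v := by
  simp only [vnSq, nrm3_sq, crossC, intC, Fin.sum_univ_three, Complex.sq_norm, Complex.normSq_apply,
    Matrix.cons_val_zero, Matrix.cons_val_one, Matrix.cons_val_two, Matrix.head_cons, Matrix.tail_cons,
    Complex.sub_re, Complex.sub_im, Complex.mul_re, Complex.mul_im, Complex.intCast_re, Complex.intCast_im]
  nlinarith [sq_nonneg ((k 0 : ℝ) * (v 0).re + (k 1 : ℝ) * (v 1).re + (k 2 : ℝ) * (v 2).re),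
    sq_nonneg ((k 0 : ℝ) * (v 0).im + (k 1 : ℝ) * (v 1).im + (k 2 : ℝ) * (v 2).im)]

/-- Fourier symbol of `∇ × (A v)` for `A = c · diag(1, 1, 0)`. -/
noncomputable def alphaCurl (c : ℝ) (k : Fin 3 → ℤ) (v : Fin 3 → ℂ) : Fin 3 → ℂ :=
  fun i => Complex.I * crossC (intC k) (fun i' => if i' = 2 then 0 else (c : ℂ) * v i') i

theorem vnSq_alphaCurl_le (c : ℝ) (k : Fin 3 → ℤ) (v : Fin 3 → ℂ) :
    vnSq (alphaCurl c k v) ≤ (|c| * nrm3 k) ^ 2 * vnSq v := by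
  set P : Fin 3 → ℂ := fun i => if i = 2 then 0 else (c : ℂ) * v i
  have hP : vnSq P ≤ c ^ 2 * vnSq v := by
    simp only [P, vnSq, Fin.sum_univ_three, Fin.isValue, Fin.reduceEq, if_false, if_true, norm_mul,
      Complex.norm_real, Real.norm_eq_abs, mul_pow, sq_abs, norm_zero]
    nlinarith [mul_nonneg (sq_nonneg c) (sq_nonneg ‖v 2‖)]
  calc vnSq (alphaCurl c k v) = vnSq (crossC (intC k) P) := by simp [alphaCurl, vnSq, P]
    _ ≤ nrm3 k ^ 2 * vnSq P := vnSq_crossC_intC_le k P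
    _ ≤ nrm3 k ^ 2 * (c ^ 2 * vnSq v) := by gcongr
    _ = (|c| * nrm3 k) ^ 2 * vnSq v := by rw [mul_pow, sq_abs]; ring

theorem norm_toLp_alphaCurl_le (c : ℝ) (k : Fin 3 → ℤ) (v : Fin 3 → ℂ) :
    ‖WithLp.toLp 2 (alphaCurl c k v)‖ ≤ |c| * nrm3 k * ‖WithLp.toLp 2 v‖ := by
  have h := vnSq_alphaCurl_le c k v
  rw [vnSq_eq_norm_sq, vnSq_eq_norm_sq, ← mul_pow] at h
  exact le_of_pow_le_pow_left₀ two_ne_zero (by unfold nrm3; positivity) h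

theorem vnSq_le_of_hasDerivAt_mode {A c : ℝ} (hcA : |c| ≤ 2 * A) {k : Fin 3 → ℤ} (hk : k ≠ 0)
    {g : ℝ → Fin 3 → ℂ}
    (hg : ∀ s, HasDerivAt g
      (fun i => ((-A * nrm3 k ^ 2 : ℝ) : ℂ) * g s i + alphaCurl c k (g s) i) s)
    {t : ℝ} (ht : 0 ≤ t) : vnSq (g t) ≤ vnSq (g 0) * exp (-(A - |c|) * t) ^ 2 := by
  have hN := one_le_nrm3 hk
  have hx : ∀ s, HasDerivAt (fun s => (WithLp.toLp 2 (g s) : EuclideanSpace ℂ (Fin 3)))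
      (-(A * nrm3 k ^ 2) • WithLp.toLp 2 (g s) + WithLp.toLp 2 (alphaCurl c k (g s))) s := by
    intro s
    refine ((PiLp.continuousLinearEquiv 2 ℝ (fun _ : Fin 3 => ℂ)).symm.hasFDerivAt.comp_hasDerivAt
      s (hg s)).congr_deriv ?_
    ext i
    simp [Complex.real_smul]
  have hrate : A - |c| ≤ A * nrm3 k ^ 2 - |c| * nrm3 k := by
    have hA : 0 ≤ A := by linarith [abs_nonneg c]
    nlinarith [mul_nonneg (sub_nonneg.2 hN) (by nlinarith : 0 ≤ A * (nrm3 k + 1) - |c|)]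
  have hdiss : ∀ s, inner ℝ (WithLp.toLp 2 (g s))
      (-(A * nrm3 k ^ 2) • WithLp.toLp 2 (g s) + WithLp.toLp 2 (alphaCurl c k (g s)))
      ≤ -(A - |c|) * ‖WithLp.toLp 2 (g s)‖ ^ 2 := fun s =>
    (inner_neg_smul_add_le (norm_toLp_alphaCurl_le c k (g s))).trans
      (mul_le_mul_of_nonneg_right (by linarith) (sq_nonneg _))
  simpa only [vnSq_eq_norm_sq] using norm_sq_le_of_inner_deriv_le hx hdiss ht

theorem summable_vnSq_of_summable_nrm3_sq_mul {v : (Fin 3 → ℤ) → Fin 3 → ℂ} (h0 : v 0 = 0)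
    (h : Summable fun k => nrm3 k ^ 2 * vnSq (v k)) : Summable fun k => vnSq (v k) :=
  h.of_nonneg_of_le (fun k => vnSq_nonneg _) fun k => by
    rcases eq_or_ne k 0 with rfl | hk
    · simp [h0, vnSq]
    · exact le_mul_of_one_le_left (vnSq_nonneg _) (one_le_pow₀ (one_le_nrm3 hk))

theorem sqrt_tsum_le_of_le_mul_sq {ι : Type*} {f g : ι → ℝ} {r : ℝ} (hr : 0 ≤ r)
    (hf : Summable f) (hg : Summable g) (h : ∀ i, f i ≤ g i * r ^ 2) :
    √(∑' i, f i) ≤ √(∑' i, g i) * r := by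
  calc √(∑' i, f i) ≤ √((∑' i, g i) * r ^ 2) :=
        Real.sqrt_le_sqrt ((hf.tsum_le_tsum h (hg.mul_right _)).trans_eq tsum_mul_right)
    _ = √(∑' i, g i) * r := by rw [Real.sqrt_mul' _ (sq_nonneg r), Real.sqrt_sq hr]

theorem isotropic_enhanced_decay_general (T η CV ρ : ℝ)
    (hη : 0 < η) (hρ : |ρ| ≤ 1)
    (B : ℝ → (Fin 3 → ℤ) → Fin 3 → ℂ)
    (hmean : ∀ t, B t 0 = 0)
    (hreg : ∀ t, Summable fun k : Fin 3 → ℤ => nrm3 k ^ 2 * vnSq (B t k))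
    (hode : ∀ t (k : Fin 3 → ℤ),
      HasDerivAt (fun s => B s k)
        (fun i =>
          ((-(η + 8 * Real.pi * Real.log 2 / (3 * CV ^ 2)) * nrm3 k ^ 2 : ℝ) : ℂ) * B t k i
          + Complex.I *
              crossC (intC k)
                (fun i' => if i' = 2 then 0
                  else ((2 * Real.pi * ρ * Real.log 2 / CV ^ 2 : ℝ) : ℂ) * B t k i') i)
        t) :
    ∀ t, 0 ≤ t → t ≤ T →
      Real.sqrt (∑' k : Fin 3 → ℤ, vnSq (B t k))
        ≤ Real.sqrt (∑' k : Fin 3 → ℤ, vnSq (B 0 k)) *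
            Real.exp (-(η + (8 - 6 * |ρ|) * Real.pi * Real.log 2 / (3 * CV ^ 2)) * t) := by
  intro t ht _
  have ha : 0 ≤ π * log 2 / CV ^ 2 := by positivity
  have hiso : 8 * π * log 2 / (3 * CV ^ 2) = 8 / 3 * (π * log 2 / CV ^ 2) := by ring
  have hc : |2 * π * ρ * log 2 / CV ^ 2| = 2 * |ρ| * (π * log 2 / CV ^ 2) := by
    rw [show 2 * π * ρ * log 2 / CV ^ 2 = 2 * ρ * (π * log 2 / CV ^ 2) by ring, abs_mul, abs_mul,
      abs_two, abs_of_nonneg ha]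
  have hcA : |2 * π * ρ * log 2 / CV ^ 2| ≤ 2 * (η + 8 * π * log 2 / (3 * CV ^ 2)) := by
    rw [hc, hiso]
    nlinarith [mul_le_mul_of_nonneg_right hρ ha]
  have hmode : ∀ k, vnSq (B t k) ≤ vnSq (B 0 k) *
      exp (-(η + (8 - 6 * |ρ|) * π * log 2 / (3 * CV ^ 2)) * t) ^ 2 := by
    intro k
    rcases eq_or_ne k 0 with rfl | hk
    · simp [hmean, vnSq]
    · convert vnSq_le_of_hasDerivAt_mode hcA hk (fun s => hode s k) ht using 5
      rw [hc]; ring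
  exact sqrt_tsum_le_of_le_mul_sq (exp_nonneg _) (summable_vnSq_of_summable_nrm3_sq_mul (hmean t)
    (hreg t)) (summable_vnSq_of_summable_nrm3_sq_mul (hmean 0) (hreg 0)) hmode

/-- Enhanced-dissipation decay for the isotropic mean-field equation
`∂_t B̄ = (η + η_iso) Δ B̄ + ∇×(A_ρ B̄)` (in Fourier variables), with
`η_iso = 8π log 2/(3 C_V²)` and `A_ρ = (2πρ log 2/C_V²)·diag(1,1,0)`:
`‖B̄_t‖_{L²} ≤ ‖B̄_0‖_{L²} exp(-(η + (8-6|ρ|)π log 2/(3C_V²)) t)` on `[0,T]`. -/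
theorem isotropic_enhanced_decay (T η CV ρ : ℝ)
    (hT : 0 ≤ T) (hη : 0 < η) (hCV : 0 < CV) (hρ : |ρ| ≤ 1)
    (B : ℝ → (Fin 3 → ℤ) → Fin 3 → ℂ)
    (hmean : ∀ t, B t 0 = 0)
    (hdiv : ∀ t k, ∑ i, (k i : ℂ) * B t k i = 0)
    (hreg : ∀ t, Summable fun k : Fin 3 → ℤ => nrm3 k ^ 2 * vnSq (B t k))
    (hode : ∀ t (k : Fin 3 → ℤ),
      HasDerivAt (fun s => B s k)
        (fun i =>
          ((-(η + 8 * Real.pi * Real.log 2 / (3 * CV ^ 2)) * nrm3 k ^ 2 : ℝ) : ℂ) * B t k i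
          + Complex.I *
              crossC (intC k)
                (fun i' => if i' = 2 then 0
                  else ((2 * Real.pi * ρ * Real.log 2 / CV ^ 2 : ℝ) : ℂ) * B t k i') i)
        t) :
    ∀ t, 0 ≤ t → t ≤ T →
      Real.sqrt (∑' k : Fin 3 → ℤ, vnSq (B t k))
        ≤ Real.sqrt (∑' k : Fin 3 → ℤ, vnSq (B 0 k)) *
            Real.exp (-(η + (8 - 6 * |ρ|) * Real.pi * Real.log 2 / (3 * CV ^ 2)) * t) :=
  isotropic_enhanced_decay_general T η CV ρ hη hρ B hmean hreg hode
end

section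
/- Fix α, β > 0 with α + β = 6 and constants C₁, C₂ > 0, ρ ∈ [−1,1]. Define the mean helicity H^n := −(2ρ/(C₁C₂)) · n^{(α+β−2)/2 − 2} · Σ_{k ∈ ℤ²\{0}, n ≤ |k| ≤ 2n} |k|^{−(α+β−2)/2} · n^{−(α+β−6)/2} — equivalently H^n = −2ρ ζ^n_{H,2}/(C₁C₂) where ζ^n_{H,2} = Σ_{k∈ℤ²\{0}, n≤|k|≤2n} |k|^{−2}. Then H^n → H := −4πρ log 2/(C₁C₂) as n → ∞, with |H^n − H| ≤ C/n. -/
open scoped BigOperators Classical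

/-!
The lattice sum `∑_{n ≤ |k| ≤ 2n} |k|⁻²` is a Riemann sum, over the unit squares `k + [0,1)²`,
for `∫_{n ≤ |x| ≤ 2n} |x|⁻² dx = 2π log 2`. If the corner `k` is farther than `2` from both
boundary circles, the integrand varies by `O(n⁻³)` on the square, and there are `O(n²)` squares
in play. Every other square lies within distance `4` of a boundary circle, so by comparing areas
there are only `O(n)` of them, each contributing `O(n⁻²)`. Hence the error is `O(1/n)`.
-/

open Function MeasureTheory Real Set
open scoped ENNReal

theorem exists_forall_abs_le_div_of_forall_le {u : ℕ → ℝ} {N : ℕ} {C : ℝ}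
    (h : ∀ n, N ≤ n → |u n| ≤ C / n) :
    ∃ C' : ℝ, ∀ n : ℕ, 1 ≤ n → |u n| ≤ C' / n := by
  refine ⟨max C 0 + ∑ m ∈ Finset.range N, m * |u m|, fun n hn => ?_⟩
  have hn0 : (0 : ℝ) < n := by exact_mod_cast hn
  have hsum : 0 ≤ ∑ m ∈ Finset.range N, (m : ℝ) * |u m| := by positivity
  rcases le_or_gt N n with hNn | hnN
  · calc |u n| ≤ C / n := h n hNn
      _ ≤ _ := by gcongr; linarith [le_max_left C 0]
  · rw [le_div_iff₀ hn0, mul_comm]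
    calc (n : ℝ) * |u n| ≤ ∑ m ∈ Finset.range N, (m : ℝ) * |u m| :=
          Finset.single_le_sum (f := fun m : ℕ => (m : ℝ) * |u m|) (fun m _ => by positivity)
            (Finset.mem_range.2 hnN)
      _ ≤ _ := le_add_of_nonneg_left (le_max_right C 0)

theorem sum_ite_le_card_filter_mul_add_card_mul {ι : Type*} (s : Finset ι) (p : ι → Prop)
    [DecidablePred p] {A B : ℝ} (hB : 0 ≤ B) :
    ∑ i ∈ s, (if p i then A else B) ≤ (s.filter p).card * A + s.card * B := by
  rw [Finset.sum_ite, Finset.sum_const, Finset.sum_const, nsmul_eq_mul, nsmul_eq_mul]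
  gcongr
  exact Finset.filter_subset _ s

theorem abs_sub_setIntegral_le_of_measure_eq_one {α : Type*} [MeasurableSpace α]
    {μ : Measure α} {s : Set α} {f : α → ℝ} {c C : ℝ} (hs : μ s = 1)
    (hf : IntegrableOn f s μ) (h : ∀ x ∈ s, |c - f x| ≤ C) :
    |c - ∫ x in s, f x ∂μ| ≤ C := by
  have hc : c = ∫ _ in s, c ∂μ := by simp [Measure.real, hs]
  have hfin : μ s < ∞ := by simp [hs]
  rw [hc, ← integral_sub (integrableOn_const (C := c) hfin.ne) hf]
  simpa [Measure.real, hs] using norm_setIntegral_le_of_norm_le_const hfin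
    fun x hx => (Real.norm_eq_abs _).trans_le (h x hx)

noncomputable def annulusWeight (a b : ℝ) : ℝ → ℝ :=
  (Icc a b).indicator fun r => (r ^ 2)⁻¹

theorem annulusWeight_nonneg (a b r : ℝ) : 0 ≤ annulusWeight a b r :=
  indicator_nonneg (fun _ _ => by positivity) r

theorem annulusWeight_le {a : ℝ} (ha : 0 < a) (b r : ℝ) :
    annulusWeight a b r ≤ (a ^ 2)⁻¹ := by
  refine indicator_apply_le' (fun hr => ?_) (fun _ => by positivity)
  exact inv_anti₀ (by positivity) (pow_le_pow_left₀ ha.le hr.1 2)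

theorem abs_inv_sq_sub_inv_sq_le {a b u v : ℝ} (ha : 0 < a) (hu : u ∈ Icc a b)
    (hv : v ∈ Icc a b) :
    |(u ^ 2)⁻¹ - (v ^ 2)⁻¹| ≤ 2 * b * |u - v| / a ^ 4 := by
  have hu0 : 0 < u := ha.trans_le hu.1
  have hv0 : 0 < v := ha.trans_le hv.1
  have hb : 0 < b := hu0.trans_le hu.2
  have hden : a ^ 4 ≤ u ^ 2 * v ^ 2 := by
    calc a ^ 4 = a ^ 2 * a ^ 2 := by ring
      _ ≤ u ^ 2 * v ^ 2 := by gcongr <;> [exact hu.1; exact hv.1]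
  have hnum : |v ^ 2 - u ^ 2| ≤ 2 * b * |u - v| := by
    rw [show v ^ 2 - u ^ 2 = (u + v) * (v - u) by ring, abs_mul, abs_sub_comm v u,
      abs_of_pos (add_pos hu0 hv0)]
    gcongr
    linarith [hu.2, hv.2]
  calc |(u ^ 2)⁻¹ - (v ^ 2)⁻¹| = |v ^ 2 - u ^ 2| / (u ^ 2 * v ^ 2) := by
        rw [inv_sub_inv (by positivity) (by positivity), abs_div,
          abs_of_pos (by positivity : 0 < u ^ 2 * v ^ 2)]
    _ ≤ 2 * b * |u - v| / a ^ 4 := div_le_div₀ (by positivity) hnum (by positivity) hden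

theorem abs_annulusWeight_sub_le {a b r s δ : ℝ} (ha : 0 < a) (hab : a ≤ b)
    (hrs : |r - s| ≤ δ) (hra : δ < |r - a|) (hrb : δ < |r - b|) :
    |annulusWeight a b r - annulusWeight a b s| ≤ 2 * b * δ / a ^ 4 := by
  have hδ : 0 ≤ δ := (abs_nonneg _).trans hrs
  have hb : 0 < b := ha.trans_le hab
  obtain ⟨hsr, hrs'⟩ := abs_le.1 hrs
  have houtside (hr : r ∉ Icc a b) (hs : s ∉ Icc a b) :
      |annulusWeight a b r - annulusWeight a b s| ≤ 2 * b * δ / a ^ 4 := by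
    simp only [annulusWeight, indicator_of_notMem hr, indicator_of_notMem hs, sub_zero,
      abs_zero]
    positivity
  rcases lt_abs.1 hra with hra | hra
  · rcases lt_abs.1 hrb with hrb | hrb
    · exact houtside (fun h => by linarith [h.2]) (fun h => by linarith [h.2])
    · have hr : r ∈ Icc a b := ⟨by linarith, by linarith⟩
      have hs : s ∈ Icc a b := ⟨by linarith, by linarith⟩
      simp only [annulusWeight, indicator_of_mem hr, indicator_of_mem hs]
      exact (abs_inv_sq_sub_inv_sq_le ha hr hs).trans (by gcongr)
  · exact houtside (fun h => by linarith [h.1]) (fun h => by linarith [h.1])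

theorem integral_annulusWeight_norm {a b : ℝ} (ha : 0 < a) (hab : a ≤ b) :
    ∫ x : ℂ, annulusWeight a b ‖x‖ = 2 * π * log (b / a) := by
  have hmul : (fun r => r * annulusWeight a b r) = (Icc a b).indicator fun r => r⁻¹ := by
    ext r
    by_cases hr : r ∈ Icc a b
    · have : r ≠ 0 := (ha.trans_le hr.1).ne'
      simp only [annulusWeight, indicator_of_mem hr]
      field_simp
    · simp only [annulusWeight, indicator_of_notMem hr, mul_zero]
  have hradial : ∫ r in Ioi (0 : ℝ), r * annulusWeight a b r = log (b / a) := by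
    rw [hmul, setIntegral_indicator measurableSet_Icc,
      inter_eq_self_of_subset_right fun r (hr : r ∈ Icc a b) => mem_Ioi.2 (ha.trans_le hr.1),
      integral_Icc_eq_integral_Ioc, ← intervalIntegral.integral_of_le hab,
      integral_inv_of_pos ha (ha.trans_le hab)]
  rw [integral_fun_norm_addHaar, Complex.finrank_real_complex]
  simp only [Measure.real, Complex.volume_ball, ENNReal.ofReal_one, one_pow, one_mul,
    ENNReal.coe_toReal, NNReal.coe_real_pi, Nat.add_one_sub_one, pow_one, smul_eq_mul, hradial,
    nsmul_eq_mul, Nat.cast_ofNat]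
  ring

theorem integrable_annulusWeight_norm {a : ℝ} (ha : 0 < a) (b : ℝ) :
    Integrable fun x : ℂ => annulusWeight a b ‖x‖ := by
  have hK : IsCompact (norm ⁻¹' Icc a b : Set ℂ) :=
    (isCompact_closedBall (0 : ℂ) b).of_isClosed_subset (isClosed_Icc.preimage continuous_norm)
      fun x hx => mem_closedBall_zero_iff.2 hx.2
  have hcont : ContinuousOn (fun x : ℂ => (‖x‖ ^ 2)⁻¹) (norm ⁻¹' Icc a b) :=
    (continuous_norm.pow 2).continuousOn.inv₀ fun x hx => pow_ne_zero 2 (ha.trans_le hx.1).ne'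
  have hf : (fun x : ℂ => annulusWeight a b ‖x‖)
      = (norm ⁻¹' Icc a b).indicator fun x => (‖x‖ ^ 2)⁻¹ := by
    ext x
    exact (indicator_comp_right (s := Icc a b) (g := fun r => (r ^ 2)⁻¹) norm).symm
  rw [hf]
  exact (hcont.integrableOn_compact hK).integrable_indicator hK.measurableSet

theorem volume_setOf_abs_norm_sub_le {r δ : ℝ} (hδ : 0 ≤ δ) (hδr : δ ≤ r) :
    volume {x : ℂ | |‖x‖ - r| ≤ δ} = ENNReal.ofReal (4 * π * r * δ) := by
  have hshell :
      {x : ℂ | |‖x‖ - r| ≤ δ} = Metric.closedBall 0 (r + δ) \ Metric.ball 0 (r - δ) := by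
    ext x
    simp only [mem_ofPred_eq, abs_le, mem_sdiff, mem_closedBall_zero_iff, Metric.mem_ball,
      dist_zero_right, not_lt]
    constructor <;> intro h <;> constructor <;> linarith [h.1, h.2]
  rw [hshell, measure_sdiff (Metric.ball_subset_closedBall.trans
      (Metric.closedBall_subset_closedBall (by linarith))) measurableSet_ball.nullMeasurableSet
      measure_ball_lt_top.ne, Complex.volume_closedBall, Complex.volume_ball,
    ← ENNReal.ofReal_coe_nnreal, NNReal.coe_real_pi, ← ENNReal.ofReal_pow (by linarith),
    ← ENNReal.ofReal_pow (by linarith), ← ENNReal.ofReal_mul (by positivity),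
    ← ENNReal.ofReal_mul (by positivity), ← ENNReal.ofReal_sub _ (by positivity)]
  congr 1
  ring

noncomputable def latticePoint (k : Fin 2 → ℤ) : ℂ := ⟨k 0, k 1⟩

def unitSquare (k : Fin 2 → ℤ) : Set ℂ :=
  Complex.measurableEquivRealProd ⁻¹' (Ico (k 0 : ℝ) (k 0 + 1) ×ˢ Ico (k 1 : ℝ) (k 1 + 1))

theorem mem_unitSquare {k : Fin 2 → ℤ} {x : ℂ} :
    x ∈ unitSquare k ↔ ⌊x.re⌋ = k 0 ∧ ⌊x.im⌋ = k 1 := by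
  simp only [unitSquare, mem_preimage, Complex.measurableEquivRealProd_apply, mem_prod, mem_Ico,
    Int.floor_eq_iff]

theorem mem_unitSquare_floor (x : ℂ) : x ∈ unitSquare ![⌊x.re⌋, ⌊x.im⌋] :=
  mem_unitSquare.2 ⟨rfl, rfl⟩

theorem measurableSet_unitSquare (k : Fin 2 → ℤ) : MeasurableSet (unitSquare k) :=
  Complex.measurableEquivRealProd.measurable (measurableSet_Ico.prod measurableSet_Ico)

theorem volume_unitSquare (k : Fin 2 → ℤ) : volume (unitSquare k) = 1 := by
  rw [unitSquare, Complex.volume_preserving_equiv_real_prod.measure_preimage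
    (measurableSet_Ico.prod measurableSet_Ico).nullMeasurableSet,
    Measure.volume_eq_prod, Measure.prod_prod, Real.volume_Ico, Real.volume_Ico]
  simp

theorem pairwise_disjoint_unitSquare : Pairwise (Disjoint on unitSquare) := by
  intro k l hkl
  refine disjoint_left.2 fun x hk hl => hkl ?_
  rw [mem_unitSquare] at hk hl
  ext i
  fin_cases i
  exacts [hk.1.symm.trans hl.1, hk.2.symm.trans hl.2]

theorem norm_sub_latticePoint_le_two {k : Fin 2 → ℤ} {x : ℂ} (hx : x ∈ unitSquare k) :
    ‖x - latticePoint k‖ ≤ 2 := by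
  rw [mem_unitSquare, Int.floor_eq_iff, Int.floor_eq_iff] at hx
  have hre : |x.re - k 0| ≤ 1 := abs_le.2 ⟨by linarith, by linarith⟩
  have him : |x.im - k 1| ≤ 1 := abs_le.2 ⟨by linarith, by linarith⟩
  calc ‖x - latticePoint k‖ ≤ |(x - latticePoint k).re| + |(x - latticePoint k).im| :=
        Complex.norm_le_abs_re_add_abs_im _
    _ ≤ 2 := by simp only [latticePoint, Complex.sub_re, Complex.sub_im]; linarith

theorem card_le_volume_of_forall_unitSquare_subset {T : Finset (Fin 2 → ℤ)} {Ω : Set ℂ}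
    (hT : ∀ k ∈ T, unitSquare k ⊆ Ω) : (T.card : ℝ≥0∞) ≤ volume Ω :=
  calc (T.card : ℝ≥0∞) = ∑ k ∈ T, volume (unitSquare k) := by simp [volume_unitSquare]
    _ = volume (⋃ k ∈ T, unitSquare k) :=
        (measure_biUnion_finset (pairwise_disjoint_unitSquare.set_pairwise _)
          fun k _ => measurableSet_unitSquare k).symm
    _ ≤ volume Ω := measure_mono (iUnion₂_subset hT)

theorem card_filter_abs_norm_latticePoint_sub_le (T : Finset (Fin 2 → ℤ)) {r δ : ℝ}
    (hδ : 0 ≤ δ) (hr : δ + 2 ≤ r) :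
    ((T.filter fun k => |‖latticePoint k‖ - r| ≤ δ).card : ℝ) ≤ 4 * π * r * (δ + 2) := by
  have hsub : ∀ k ∈ T.filter fun k => |‖latticePoint k‖ - r| ≤ δ,
      unitSquare k ⊆ {x : ℂ | |‖x‖ - r| ≤ δ + 2} := fun k hk x hx =>
    calc |‖x‖ - r| ≤ |‖x‖ - ‖latticePoint k‖| + |‖latticePoint k‖ - r| :=
          abs_sub_le _ _ _
      _ ≤ ‖x - latticePoint k‖ + δ :=
          add_le_add (abs_norm_sub_norm_le _ _) (Finset.mem_filter.1 hk).2
      _ ≤ δ + 2 := by linarith [norm_sub_latticePoint_le_two hx]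
  have h := (card_le_volume_of_forall_unitSquare_subset hsub).trans_eq
    (volume_setOf_abs_norm_sub_le (by linarith) hr)
  have hr0 : 0 ≤ r := by linarith
  have hreal := ENNReal.toReal_mono ENNReal.ofReal_ne_top h
  rwa [ENNReal.toReal_ofReal (mul_nonneg (mul_nonneg (by positivity) hr0) (by linarith)),
    ENNReal.toReal_natCast] at hreal

theorem card_filter_near_two_circles_le (T : Finset (Fin 2 → ℤ)) {a b : ℝ} (ha : 4 ≤ a)
    (hb : 4 ≤ b) :
    ((T.filter fun k => |‖latticePoint k‖ - a| ≤ 2 ∨ |‖latticePoint k‖ - b| ≤ 2).card : ℝ) ≤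
      16 * π * (a + b) := by
  rw [Finset.filter_or]
  calc _ ≤ ((T.filter fun k => |‖latticePoint k‖ - a| ≤ 2).card : ℝ)
        + (T.filter fun k => |‖latticePoint k‖ - b| ≤ 2).card := by
        exact_mod_cast Finset.card_union_le _ _
    _ ≤ 4 * π * a * (2 + 2) + 4 * π * b * (2 + 2) :=
        add_le_add (card_filter_abs_norm_latticePoint_sub_le _ zero_le_two (by linarith))
          (card_filter_abs_norm_latticePoint_sub_le _ zero_le_two (by linarith))
    _ = 16 * π * (a + b) := by ring

noncomputable def latticeBox (M : ℕ) : Finset (Fin 2 → ℤ) :=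
  Fintype.piFinset fun _ => Finset.Icc (-(M : ℤ)) M

theorem card_latticeBox (M : ℕ) : (latticeBox M).card = (2 * M + 1) ^ 2 := by
  simp only [latticeBox, Fintype.card_piFinset, Int.card_Icc, Finset.prod_const, Finset.card_univ,
    Fintype.card_fin]
  congr 1
  omega

theorem floor_mem_Icc_of_abs_le {y : ℝ} {M : ℕ} (hy : |y| ≤ M) :
    ⌊y⌋ ∈ Finset.Icc (-(M : ℤ)) M := by
  rw [abs_le] at hy
  exact Finset.mem_Icc.2
    ⟨Int.le_floor.2 (by push_cast; linarith), Int.floor_le_iff.2 (by push_cast; linarith)⟩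

theorem floor_mem_latticeBox {x : ℂ} {M : ℕ} (hx : ‖x‖ ≤ M) :
    ![⌊x.re⌋, ⌊x.im⌋] ∈ latticeBox M := by
  simp only [latticeBox, Fintype.mem_piFinset, Fin.forall_fin_two]
  exact ⟨floor_mem_Icc_of_abs_le ((Complex.abs_re_le_norm x).trans hx),
    floor_mem_Icc_of_abs_le ((Complex.abs_im_le_norm x).trans hx)⟩

theorem lt_norm_latticePoint_of_notMem_latticeBox {k : Fin 2 → ℤ} {M : ℕ}
    (hk : k ∉ latticeBox M) : (M : ℝ) < ‖latticePoint k‖ := by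
  by_contra! h
  refine hk ?_
  simp only [latticeBox, Fintype.mem_piFinset, Fin.forall_fin_two, Finset.mem_Icc, ← abs_le]
  have h0 := (Complex.abs_re_le_norm (latticePoint k)).trans h
  have h1 := (Complex.abs_im_le_norm (latticePoint k)).trans h
  simp only [latticePoint] at h0 h1
  exact ⟨by exact_mod_cast h0, by exact_mod_cast h1⟩

theorem integral_eq_sum_setIntegral_unitSquare {f : ℂ → ℝ} {M : ℕ} (hf : Integrable f)
    (hM : ∀ x : ℂ, (M : ℝ) < ‖x‖ → f x = 0) :
    ∫ x, f x = ∑ k ∈ latticeBox M, ∫ x in unitSquare k, f x := by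
  rw [← integral_biUnion_finset _ (fun k _ => measurableSet_unitSquare k)
    (pairwise_disjoint_unitSquare.set_pairwise _) fun k _ => hf.integrableOn]
  refine (setIntegral_eq_integral_of_forall_compl_eq_zero fun x hx => hM x ?_).symm
  by_contra! h
  exact hx (mem_biUnion (floor_mem_latticeBox h) (mem_unitSquare_floor x))

theorem abs_annulusWeight_latticePoint_sub_setIntegral_le {a b : ℝ} (ha : 0 < a) (hab : a ≤ b)
    (k : Fin 2 → ℤ) :
    |annulusWeight a b ‖latticePoint k‖ - ∫ x in unitSquare k, annulusWeight a b ‖x‖| ≤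
      if |‖latticePoint k‖ - a| ≤ 2 ∨ |‖latticePoint k‖ - b| ≤ 2 then (a ^ 2)⁻¹
      else 4 * b / a ^ 4 := by
  refine abs_sub_setIntegral_le_of_measure_eq_one (volume_unitSquare k)
    (integrable_annulusWeight_norm ha b).integrableOn fun x hx => ?_
  split_ifs with hnear
  · exact abs_sub_le_of_nonneg_of_le (annulusWeight_nonneg _ _ _) (annulusWeight_le ha _ _)
      (annulusWeight_nonneg _ _ _) (annulusWeight_le ha _ _)
  · rw [not_or, not_le, not_le] at hnear
    have hdist : |‖latticePoint k‖ - ‖x‖| ≤ 2 := by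
      rw [abs_sub_comm]
      exact (abs_norm_sub_norm_le _ _).trans (norm_sub_latticePoint_le_two hx)
    exact (abs_annulusWeight_sub_le ha hab hdist hnear.1 hnear.2).trans_eq (by ring)

theorem abs_sum_annulusWeight_latticePoint_sub_le {n : ℕ} (hn : 4 ≤ n) :
    |∑ k ∈ latticeBox (2 * n), annulusWeight n (2 * n) ‖latticePoint k‖ - 2 * π * log 2| ≤
      (48 * π + 200) / n := by
  have hn' : (4 : ℝ) ≤ n := by exact_mod_cast hn
  have hn0 : (0 : ℝ) < n := by linarith
  have hI : 2 * π * log 2 = ∫ x : ℂ, annulusWeight n (2 * n) ‖x‖ := by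
    rw [integral_annulusWeight_norm hn0 (by linarith), mul_div_cancel_right₀ _ hn0.ne']
  have hdecomp := integral_eq_sum_setIntegral_unitSquare (M := 2 * n)
    (integrable_annulusWeight_norm hn0 (2 * n)) fun x hx => by
      refine indicator_of_notMem (fun h => ?_) _
      push_cast at hx
      linarith [h.2]
  set near := fun k : Fin 2 → ℤ =>
    |‖latticePoint k‖ - n| ≤ 2 ∨ |‖latticePoint k‖ - 2 * n| ≤ 2
  have hnear : ((latticeBox (2 * n)).filter near).card ≤ 48 * π * n :=
    (card_filter_near_two_circles_le _ hn' (by linarith)).trans_eq (by ring)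
  have hbox : ((latticeBox (2 * n)).card : ℝ) ≤ 25 * n ^ 2 := by
    rw [card_latticeBox]
    push_cast
    nlinarith
  rw [hI, hdecomp, ← Finset.sum_sub_distrib]
  calc _ ≤ ∑ k ∈ latticeBox (2 * n), (if near k then ((n : ℝ) ^ 2)⁻¹ else 4 * (2 * n) / n ^ 4) :=
        (Finset.abs_sum_le_sum_abs _ _).trans (Finset.sum_le_sum fun k _ =>
          abs_annulusWeight_latticePoint_sub_setIntegral_le hn0 (by linarith) k)
    _ ≤ (48 * π * n) * ((n : ℝ) ^ 2)⁻¹ + 25 * n ^ 2 * (4 * (2 * n) / n ^ 4) := by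
        refine (sum_ite_le_card_filter_mul_add_card_mul _ _ (by positivity)).trans ?_
        gcongr
    _ = (48 * π + 200) / n := by field_simp; ring

theorem nrm2_eq_norm_latticePoint (k : Fin 2 → ℤ) : nrm2 k = ‖latticePoint k‖ := by
  rw [Complex.norm_eq_sqrt_sq_add_sq, nrm2, latticePoint]

theorem tsum_ite_nrm2_eq_sum_latticeBox {n : ℕ} (hn : 1 ≤ n) :
    (∑' k : Fin 2 → ℤ,
        if k ≠ 0 ∧ (n : ℝ) ≤ nrm2 k ∧ nrm2 k ≤ 2 * n then 1 / nrm2 k ^ 2 else 0)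
      = ∑ k ∈ latticeBox (2 * n), annulusWeight n (2 * n) ‖latticePoint k‖ := by
  have hn0 : (0 : ℝ) < n := by exact_mod_cast hn
  have hterm : ∀ k : Fin 2 → ℤ,
      (if k ≠ 0 ∧ (n : ℝ) ≤ nrm2 k ∧ nrm2 k ≤ 2 * n then 1 / nrm2 k ^ 2 else 0)
        = annulusWeight n (2 * n) ‖latticePoint k‖ := by
    intro k
    rw [← nrm2_eq_norm_latticePoint, annulusWeight, indicator_apply, one_div]
    refine if_congr ⟨fun h => h.2, fun h => ⟨?_, h⟩⟩ rfl rfl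
    rintro rfl
    have h0 : nrm2 0 = 0 := by simp [nrm2]
    linarith [h.1]
  simp_rw [hterm]
  refine tsum_eq_sum fun k hk => indicator_of_notMem (fun h => ?_) _
  have := lt_norm_latticePoint_of_notMem_latticeBox hk
  push_cast at this
  linarith [h.2]

theorem helicity_convergence_general (ρ C₁ C₂ : ℝ) :
    ∃ C : ℝ, ∀ n : ℕ, 1 ≤ n →
      |(-2 * ρ / (C₁ * C₂)) *
          (∑' k : Fin 2 → ℤ,
            if k ≠ 0 ∧ (n : ℝ) ≤ nrm2 k ∧ nrm2 k ≤ 2 * n then 1 / nrm2 k ^ 2 else 0)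
        - (-4 * Real.pi * ρ * Real.log 2 / (C₁ * C₂))| ≤ C / n := by
  refine exists_forall_abs_le_div_of_forall_le (N := 4)
    (C := |-2 * ρ / (C₁ * C₂)| * (48 * π + 200)) fun n hn => ?_
  rw [tsum_ite_nrm2_eq_sum_latticeBox (by omega),
    show -4 * π * ρ * log 2 / (C₁ * C₂) = -2 * ρ / (C₁ * C₂) * (2 * π * log 2) by ring,
    ← mul_sub, abs_mul]
  exact (mul_le_mul_of_nonneg_left (abs_sum_annulusWeight_latticePoint_sub_le hn)
    (abs_nonneg _)).trans_eq (mul_div_assoc _ _ _).symm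

/-- Convergence of the mean helicity: with `α + β = 6` the helicity reduces to
`H^n = -2ρ ζ^n_{H,2}/(C₁C₂)` with `ζ^n_{H,2} = Σ_{k ∈ ℤ²\{0}, n ≤ |k| ≤ 2n} |k|^{-2}`,
and `H^n → H = -4πρ log 2/(C₁C₂)` with `|H^n - H| ≤ C/n`. -/
theorem helicity_convergence (ρ C₁ C₂ : ℝ) (hC₁ : 0 < C₁) (hC₂ : 0 < C₂)
    (hρ : -1 ≤ ρ ∧ ρ ≤ 1) :
    ∃ C : ℝ, ∀ n : ℕ, 1 ≤ n →
      |(-2 * ρ / (C₁ * C₂)) *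
          (∑' k : Fin 2 → ℤ,
            if k ≠ 0 ∧ (n : ℝ) ≤ nrm2 k ∧ nrm2 k ≤ 2 * n then 1 / nrm2 k ^ 2 else 0)
        - (-4 * Real.pi * ρ * Real.log 2 / (C₁ * C₂))| ≤ C / n :=
  helicity_convergence_general ρ C₁ C₂
end
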